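/- arXiv:1411.3070 — 2 statements merged into one kernel-verified Lean document; each statement's English description precedes it below -/
import Mathlib

section
/- For all real x ≥ 1, log Γ(x) ≥ (x - γ)·log(x) - x + 1, where γ = 0.57722... is the Euler–Mascheroni constant. -/
/-!
Put `F x = log Γ(x) + (x - 1) (1 - log x)`; the claim is `(1 - γ) log x ≤ F x` for `x ≥ 1`, with
equality at `x = 1`. By the Gauss product, `F x` is the limit of
`∑_{j<n} [(x+j) log (1 + 1/(x+j)) - (1+j) log (1 + 1/(1+j))]`, whose `x`-derivative is
`∑_{j<n} β(x+j)` with `β s = log (1 + 1/s) - 1/(s+1)`. So it suffices to bound this sum from below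
by `(1 - γ)/u` up to an error vanishing as `n → ∞`. For `u ≥ 7/4` this holds termwise:
`β v ≥ 0.4232 (1/v - 1/(v+1))` by two terms of the series of `log (1 + 1/v)`, and the right side
telescopes. On `[1, 7/4]`, `u ↦ ∑_{j<n} β(u+j) - (1-γ)/u` is increasing, which follows from
comparing `∑ 1/(u+j+1)²` with a shifted telescoping sum; at `u = 1` its value is
`γ - (H_{n+1} - log (n+1)) → 0`. Both regimes need `γ` to about three decimals, which comes from
the first fifteen harmonic numbers and telescoping bounds on the tail.
-/

open Real Filter Topology Set
open scoped Nat

lemma monotoneOn_of_hasDerivAt_nonneg {f f' : ℝ → ℝ} {D : Set ℝ} (hD : Convex ℝ D)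
    (hf : ∀ x ∈ D, HasDerivAt f (f' x) x) (hf' : ∀ x ∈ interior D, 0 ≤ f' x) :
    MonotoneOn f D :=
  monotoneOn_of_hasDerivWithinAt_nonneg hD (fun x hx => (hf x hx).continuousAt.continuousWithinAt)
    (fun x hx => (hf x (interior_subset hx)).hasDerivWithinAt) hf'

lemma log_le_half_sub_inv {x : ℝ} (hx : 1 ≤ x) : log x ≤ (x - x⁻¹) / 2 := by
  have hmono : MonotoneOn (fun y => (y - y⁻¹) / 2 - log y) (Ici 1) := by
    refine monotoneOn_of_hasDerivAt_nonneg (f' := fun y => (1 - y⁻¹) ^ 2 / 2) (convex_Ici 1)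
      (fun y hy => ?_) (fun y _ => by positivity)
    have hy : y ≠ 0 := (zero_lt_one.trans_le hy).ne'
    refine ((((hasDerivAt_id y).sub (hasDerivAt_inv hy)).div_const 2).sub
      (hasDerivAt_log hy)).congr_deriv ?_
    field_simp
    ring
  simpa using hmono self_mem_Ici hx hx

lemma two_div_add_le_log_one_add_inv {v : ℝ} (hv : 0 < v) :
    2 / (2 * v + 1) + 2 / (3 * (2 * v + 1) ^ 3) ≤ log (1 + v⁻¹) := by
  have h := sum_le_hasSum (Finset.range 2) (fun k _ => by positivity) (hasSum_log_one_add_inv hv)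
  refine le_of_eq_of_le ?_ h
  simp only [Finset.sum_range_succ, Finset.sum_range_zero]
  norm_num
  field_simp

lemma eulerMascheroniSeq_succ_sub (n : ℕ) :
    eulerMascheroniSeq (n + 1) - eulerMascheroniSeq n =
      (n + 1 : ℝ)⁻¹ - log (1 + (n + 1 : ℝ)⁻¹) := by
  have hn : (n + 1 : ℝ) ≠ 0 := by positivity
  have hdiv : 1 + (n + 1 : ℝ)⁻¹ = (n + 1 + 1) / (n + 1) := by field_simp
  rw [eulerMascheroniSeq, eulerMascheroniSeq, harmonic_succ, hdiv, log_div (by positivity) hn]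
  push_cast
  ring

lemma monotone_eulerMascheroniSeq_add_inv_two_mul_succ :
    Monotone fun n : ℕ => eulerMascheroniSeq n + (2 * (n + 1) : ℝ)⁻¹ := by
  refine monotone_nat_of_le_succ fun n => ?_
  have hlog := log_le_half_sub_inv (x := 1 + (n + 1 : ℝ)⁻¹) (by simp; positivity)
  have hstep := eulerMascheroniSeq_succ_sub n
  have key : (1 + (n + 1 : ℝ)⁻¹ - (1 + (n + 1 : ℝ)⁻¹)⁻¹) / 2
      = (n + 1 : ℝ)⁻¹ - (2 * (n + 1) : ℝ)⁻¹ + (2 * (n + 1 + 1) : ℝ)⁻¹ := by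
    field_simp
    ring
  push_cast
  linarith

lemma antitone_eulerMascheroniSeq_add_inv_two_mul_add_one :
    Antitone fun n : ℕ => eulerMascheroniSeq n + (2 * n + 1 : ℝ)⁻¹ := by
  refine antitone_nat_of_succ_le fun n => ?_
  have hlog := two_div_add_le_log_one_add_inv (v := n + 1) (by positivity)
  have hstep := eulerMascheroniSeq_succ_sub n
  have hcube : 0 ≤ 2 / (3 * (2 * (n + 1 : ℝ) + 1) ^ 3) := by positivity
  have key : (2 * n + 1 : ℝ)⁻¹ - ((n + 1 : ℝ)⁻¹ - 2 / (2 * (n + 1 : ℝ) + 1)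
      + (2 * (n + 1 : ℝ) + 1)⁻¹) = 1 / ((n + 1) * (2 * n + 1) * (2 * n + 3)) := by
    field_simp
    ring
  have hpos : 0 ≤ 1 / ((n + 1) * (2 * n + 1) * (2 * n + 3) : ℝ) := by positivity
  push_cast
  linarith

lemma tendsto_eulerMascheroniSeq_add {f : ℕ → ℝ} (hf : Tendsto f atTop (𝓝 0)) :
    Tendsto (fun n => eulerMascheroniSeq n + f n) atTop (𝓝 eulerMascheroniConstant) := by
  simpa using tendsto_eulerMascheroniSeq.add hf

lemma eulerMascheroniSeq_add_inv_two_mul_succ_le (n : ℕ) :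
    eulerMascheroniSeq n + (2 * (n + 1) : ℝ)⁻¹ ≤ eulerMascheroniConstant :=
  monotone_eulerMascheroniSeq_add_inv_two_mul_succ.ge_of_tendsto
    (tendsto_eulerMascheroniSeq_add <| tendsto_inv_atTop_zero.comp <|
      Tendsto.const_mul_atTop two_pos <|
        tendsto_atTop_add_const_right _ 1 tendsto_natCast_atTop_atTop) n

lemma le_eulerMascheroniSeq_add_inv_two_mul_add_one (n : ℕ) :
    eulerMascheroniConstant ≤ eulerMascheroniSeq n + (2 * n + 1 : ℝ)⁻¹ :=
  antitone_eulerMascheroniSeq_add_inv_two_mul_add_one.le_of_tendsto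
    (tendsto_eulerMascheroniSeq_add <| tendsto_inv_atTop_zero.comp <|
      tendsto_atTop_add_const_right _ 1 <|
        tendsto_natCast_atTop_atTop.const_mul_atTop two_pos) n

-- `15 + 1` is a power of `2`, so only bounds on `log 2` are needed.
lemma eulerMascheroniSeq_fifteen :
    eulerMascheroniSeq 15 = 1195757 / 360360 - 4 * log 2 := by
  have hlog : log ((15 : ℕ) + 1 : ℝ) = 4 * log 2 := by
    rw [show ((15 : ℕ) + 1 : ℝ) = 2 ^ 4 by norm_num, log_pow]
    norm_num
  rw [eulerMascheroniSeq, hlog]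
  norm_num [harmonic, Finset.sum_range_succ]

lemma eulerMascheroniConstant_mem_Ioo : eulerMascheroniConstant ∈ Ioo 0.5768 0.578 := by
  have hlo := eulerMascheroniSeq_add_inv_two_mul_succ_le 15
  have hhi := le_eulerMascheroniSeq_add_inv_two_mul_add_one 15
  rw [eulerMascheroniSeq_fifteen] at hlo hhi
  have := log_two_gt_d9
  have := log_two_lt_d9
  constructor <;> norm_num at hlo hhi ⊢ <;> linarith

lemma hasDerivAt_log_add_one {s : ℝ} (hs : -1 < s) :
    HasDerivAt (fun s => log (s + 1)) (s + 1)⁻¹ s :=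
  (hasDerivAt_log (by linarith)).comp_add_const s 1

lemma hasDerivAt_mul_log_add_one_sub_log {s : ℝ} (hs : 0 < s) :
    HasDerivAt (fun s => s * (log (s + 1) - log s)) (log (s + 1) - log s - (s + 1)⁻¹) s := by
  refine ((hasDerivAt_id' s).fun_mul ((hasDerivAt_log_add_one (by linarith)).fun_sub
    (hasDerivAt_log hs.ne'))).congr_deriv ?_
  field_simp
  ring

lemma hasDerivAt_log_add_one_sub_log_sub_inv {s : ℝ} (hs : 0 < s) :
    HasDerivAt (fun s => log (s + 1) - log s - (s + 1)⁻¹)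
      ((s + 1)⁻¹ - s⁻¹ + ((s + 1) ^ 2)⁻¹) s := by
  refine (((hasDerivAt_log_add_one (by linarith)).fun_sub (hasDerivAt_log hs.ne')).fun_sub
    ((hasDerivAt_inv (by positivity)).comp_add_const s 1)).congr_deriv ?_
  ring

/-- `logGammaApprox n x - logGammaApprox n 1 → log Γ(x) + (x - 1) (1 - log x)` and
`digammaApprox n x → ψ(x + 1) - log x`; the second is the `x`-derivative of the first. -/
noncomputable def logGammaApprox (n : ℕ) (x : ℝ) : ℝ :=
  ∑ j ∈ Finset.range n, (x + j) * (log (x + j + 1) - log (x + j))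

noncomputable def digammaApprox (n : ℕ) (x : ℝ) : ℝ :=
  ∑ j ∈ Finset.range n, (log (x + j + 1) - log (x + j) - (x + j + 1)⁻¹)

lemma hasDerivAt_logGammaApprox (n : ℕ) {x : ℝ} (hx : 0 < x) :
    HasDerivAt (logGammaApprox n) (digammaApprox n x) x := by
  unfold logGammaApprox digammaApprox
  exact HasDerivAt.fun_sum fun j _ =>
    (hasDerivAt_mul_log_add_one_sub_log (by positivity)).comp_add_const x (j : ℝ)

lemma hasDerivAt_digammaApprox (n : ℕ) {x : ℝ} (hx : 0 < x) :
    HasDerivAt (digammaApprox n)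
      (∑ j ∈ Finset.range n, ((x + j + 1) ^ 2)⁻¹ - (x⁻¹ - (x + n)⁻¹)) x := by
  refine (HasDerivAt.fun_sum fun (j : ℕ) _ =>
    (hasDerivAt_log_add_one_sub_log_sub_inv (s := x + j) (by positivity)).comp_add_const x
      (j : ℝ)).congr_deriv ?_
  have htel := Finset.sum_range_sub' (fun j : ℕ => (x + j)⁻¹) n
  push_cast at htel ⊢
  rw [add_zero] at htel
  rw [← htel, ← Finset.sum_sub_distrib]
  refine Finset.sum_congr rfl fun j _ => ?_
  ring

lemma logGammaApprox_eq (n : ℕ) (x : ℝ) :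
    logGammaApprox n x = (x + n) * log (x + n) - x * log n - log n ! + log x - x * log x
      + BohrMollerup.logGammaSeq x n := by
  have hterm : ∀ j : ℕ, (x + j) * (log (x + j + 1) - log (x + j)) =
      ((x + (j + 1 : ℕ)) * log (x + (j + 1 : ℕ)) - (x + j) * log (x + j))
        - log (x + (j + 1 : ℕ)) := by
    intro j
    push_cast [← add_assoc]
    ring
  simp only [logGammaApprox, hterm, Finset.sum_sub_distrib,
    Finset.sum_range_sub (fun j : ℕ => (x + j) * log (x + j)), BohrMollerup.logGammaSeq,
    Finset.sum_range_succ' (fun m : ℕ => log (x + m))]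
  simp only [CharP.cast_eq_zero, add_zero]
  ring

lemma tendsto_add_mul_log_add_sub_mul_log (t : ℝ) :
    Tendsto (fun y : ℝ => (t + y) * log (t + y) - (t + y) * log y) atTop (𝓝 t) := by
  have hlog : Tendsto (fun y : ℝ => log (1 + t / y)) atTop (𝓝 0) := by
    simpa using ((tendsto_const_nhds (x := (1 : ℝ))).add
      (tendsto_const_nhds.div_atTop tendsto_id)).log (by norm_num)
  have h := (tendsto_mul_log_one_add_div_atTop t).add (hlog.const_mul t)
  rw [mul_zero, add_zero] at h
  refine h.congr' ?_
  filter_upwards [eventually_gt_atTop 0, eventually_gt_atTop (-t)] with y hy hty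
  have hdiv : 1 + t / y = (t + y) / y := by field_simp; ring
  rw [hdiv, log_div (by linarith) hy.ne']
  ring

lemma tendsto_logGammaApprox_sub {x : ℝ} (hx : 0 < x) :
    Tendsto (fun n => logGammaApprox n x - logGammaApprox n 1) atTop
      (𝓝 (log (Gamma x) + (x - 1) * (1 - log x))) := by
  have h := ((BohrMollerup.tendsto_log_gamma hx).sub (BohrMollerup.tendsto_log_gamma one_pos)).add
    (((tendsto_add_mul_log_add_sub_mul_log x).sub
      (tendsto_add_mul_log_add_sub_mul_log 1)).comp tendsto_natCast_atTop_atTop)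
  rw [Gamma_one, log_one, sub_zero] at h
  convert h.add_const (log x - x * log x) using 1
  · ext n
    simp only [logGammaApprox_eq, Function.comp_apply, log_one, one_mul, mul_zero]
    ring
  · congr 1; ring

lemma digammaApprox_one (n : ℕ) : digammaApprox n 1 = 1 - eulerMascheroniSeq' (n + 1) := by
  suffices h : digammaApprox n 1 = log (n + 1) - (harmonic (n + 1) - 1) by
    rw [h, eulerMascheroniSeq', if_neg n.succ_ne_zero]
    push_cast
    ring
  induction n with
  | zero => simp [digammaApprox]
  | succ n ih =>
    rw [digammaApprox, Finset.sum_range_succ, ← digammaApprox, ih, harmonic_succ (n + 1)]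
    push_cast
    ring_nf

lemma tendsto_digammaApprox_one :
    Tendsto (fun n => digammaApprox n 1) atTop (𝓝 (1 - eulerMascheroniConstant)) := by
  simpa only [digammaApprox_one, Function.comp_def] using
    (tendsto_eulerMascheroniSeq'.comp (tendsto_add_atTop_nat 1)).const_sub 1

lemma inv_sub_inv_le_inv_sq {s c : ℝ} (hs : 0 < s) (hcs : c < s)
    (h : c * (1 - c) ≤ s * (1 - 2 * c)) :
    (s - c)⁻¹ - (s - c + 1)⁻¹ ≤ (s ^ 2)⁻¹ := by
  have hsc : 0 < s - c := by linarith
  rw [inv_sub_inv hsc.ne' (by linarith), inv_eq_one_div,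
    div_le_div_iff₀ (by positivity) (by positivity)]
  nlinarith

lemma inv_sub_inv_le_sum_inv_sq_sub (n : ℕ) {u c : ℝ} (hu : 0 < u) (hc : c ≤ 1 / 2)
    (h : c * (1 - c) ≤ (u + 1) * (1 - 2 * c)) :
    (u + 1 - c)⁻¹ - u⁻¹ ≤ ∑ j ∈ Finset.range n, ((u + j + 1) ^ 2)⁻¹ - (u⁻¹ - (u + n)⁻¹) := by
  have hterm : ∀ j ∈ Finset.range n,
      (u + 1 - c + j)⁻¹ - (u + 1 - c + (j + 1 : ℕ))⁻¹ ≤ ((u + j + 1) ^ 2)⁻¹ := fun j _ => by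
    have hj : (0 : ℝ) ≤ j := j.cast_nonneg
    have := inv_sub_inv_le_inv_sq (s := u + j + 1) (c := c) (by positivity) (by linarith)
      (by nlinarith [mul_nonneg hj (by linarith : (0 : ℝ) ≤ 1 - 2 * c)])
    convert this using 3 <;> push_cast <;> ring
  have hsum := Finset.sum_le_sum hterm
  rw [Finset.sum_range_sub' (fun j : ℕ => (u + 1 - c + j)⁻¹) n] at hsum
  have hn : (0 : ℝ) ≤ n := n.cast_nonneg
  have : (u + 1 - c + n)⁻¹ ≤ (u + n)⁻¹ := inv_anti₀ (by positivity) (by linarith)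
  push_cast at hsum
  rw [add_zero] at hsum
  linarith

lemma monotoneOn_digammaApprox_sub_mul_inv (n : ℕ) {b : ℝ} (hb : 0.422 ≤ b) :
    MonotoneOn (fun u => digammaApprox n u - b * u⁻¹) (Icc 1 (7 / 4)) := by
  refine monotoneOn_of_hasDerivAt_nonneg
    (f' := fun u =>
      ∑ j ∈ Finset.range n, ((u + j + 1) ^ 2)⁻¹ - (u⁻¹ - (u + n)⁻¹) - b * -(u ^ 2)⁻¹)
    (convex_Icc _ _) (fun u hu => ?_) (fun u hu => ?_)
  · have hu0 : 0 < u := by linarith [hu.1]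
    exact (hasDerivAt_digammaApprox n hu0).sub ((hasDerivAt_inv hu0.ne').const_mul b)
  · rw [interior_Icc] at hu
    obtain ⟨hu1, hu2⟩ := hu
    -- no single shift `c` works on all of `[1, 7/4]`
    obtain ⟨c, hc, hcu, hcb⟩ : ∃ c : ℝ, c ≤ 1 / 2 ∧ c * (1 - c) ≤ (u + 1) * (1 - 2 * c) ∧
        (1 - c) * u ≤ b * (u + 1 - c) := by
      rcases le_or_gt u (7 / 5) with h | h
      · exact ⟨2 / 5, by norm_num, by nlinarith, by nlinarith⟩
      · exact ⟨89 / 200, by norm_num, by nlinarith, by nlinarith⟩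
    have hsum := inv_sub_inv_le_sum_inv_sq_sub n (by linarith) hc hcu
    have hc1 : 0 < u + 1 - c := by linarith
    have key : 0 ≤ (u + 1 - c)⁻¹ - u⁻¹ + b * (u ^ 2)⁻¹ := by
      have : (u + 1 - c)⁻¹ - u⁻¹ + b * (u ^ 2)⁻¹
          = (b * (u + 1 - c) - (1 - c) * u) / (u ^ 2 * (u + 1 - c)) := by
        field_simp
        ring
      rw [this]
      exact div_nonneg (by linarith) (by positivity)
    simp only [mul_neg]
    linarith

lemma mul_inv_sub_inv_le_log_sub_log_sub_inv {v : ℝ} (hv : 7 / 4 ≤ v) :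
    0.4232 * (v⁻¹ - (v + 1)⁻¹) ≤ log (v + 1) - log v - (v + 1)⁻¹ := by
  have hv0 : 0 < v := by linarith
  have hlog := two_div_add_le_log_one_add_inv hv0
  have hdiv : 1 + v⁻¹ = (v + 1) / v := by field_simp
  rw [hdiv, log_div (by positivity) hv0.ne'] at hlog
  have hp : 0 ≤ 1.8432 * v ^ 3 - 1.2352 * v ^ 2 - 2.6176 * v - 1.2696 := by
    have h := sub_nonneg.2 hv
    nlinarith [mul_nonneg (mul_nonneg h h) h, mul_nonneg h h]
  set p := 1.8432 * v ^ 3 - 1.2352 * v ^ 2 - 2.6176 * v - 1.2696 with hp_def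
  have key : 2 / (2 * v + 1) + 2 / (3 * (2 * v + 1) ^ 3) - (v + 1)⁻¹ - 0.4232 * (v⁻¹ - (v + 1)⁻¹)
      = p / (3 * v * (v + 1) * (2 * v + 1) ^ 3) := by
    rw [hp_def]
    field_simp
    ring
  have : 0 ≤ p / (3 * v * (v + 1) * (2 * v + 1) ^ 3) := div_nonneg hp (by positivity)
  linarith

lemma mul_inv_sub_inv_le_digammaApprox (n : ℕ) {b u : ℝ} (hb : b ≤ 0.4232)
    (hu : 7 / 4 ≤ u) : b * (u⁻¹ - (u + n)⁻¹) ≤ digammaApprox n u := by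
  have htel := Finset.sum_range_sub' (fun j : ℕ => (u + j)⁻¹) n
  push_cast at htel
  rw [add_zero] at htel
  rw [← htel, Finset.mul_sum, digammaApprox]
  refine Finset.sum_le_sum fun j _ => ?_
  have hj : (0 : ℝ) ≤ j := j.cast_nonneg
  have hanti : 0 ≤ (u + j)⁻¹ - (u + j + 1)⁻¹ :=
    sub_nonneg.2 (inv_anti₀ (by positivity) (by linarith))
  calc b * ((u + j)⁻¹ - (u + (j + 1))⁻¹)
      ≤ 0.4232 * ((u + j)⁻¹ - (u + j + 1)⁻¹) := by
        rw [← add_assoc]; exact mul_le_mul_of_nonneg_right hb hanti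
    _ ≤ _ := mul_inv_sub_inv_le_log_sub_log_sub_inv (by linarith)

lemma min_le_digammaApprox_sub_mul_inv (n : ℕ) {b u : ℝ} (hb : b ∈ Icc 0.422 0.4232)
    (hu : 1 ≤ u) :
    min (digammaApprox n 1 - b) (-(n + 1 : ℝ)⁻¹) ≤ digammaApprox n u - b * u⁻¹ := by
  rcases le_or_gt u (7 / 4) with h | h
  · refine (min_le_left _ _).trans ?_
    simpa using monotoneOn_digammaApprox_sub_mul_inv n hb.1 ⟨le_rfl, by norm_num⟩ ⟨hu, h⟩ hu
  · refine (min_le_right _ _).trans ?_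
    have hbig := mul_inv_sub_inv_le_digammaApprox n hb.2 h.le
    have hn : (0 : ℝ) ≤ n := n.cast_nonneg
    have : b * (u + n)⁻¹ ≤ (n + 1 : ℝ)⁻¹ :=
      (mul_le_of_le_one_left (by positivity) (by linarith [hb.2])).trans
        (inv_anti₀ (by positivity) (by linarith))
    linarith

lemma mul_log_add_le_logGammaApprox_sub (n : ℕ) {b m x : ℝ} (hx : 1 ≤ x)
    (h : ∀ u, 1 ≤ u → m ≤ digammaApprox n u - b * u⁻¹) :
    b * log x + m * (x - 1) ≤ logGammaApprox n x - logGammaApprox n 1 := by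
  have hmono : MonotoneOn (fun y => logGammaApprox n y - b * log y - m * y) (Ici 1) := by
    refine monotoneOn_of_hasDerivAt_nonneg (f' := fun y => digammaApprox n y - b * y⁻¹ - m * 1)
      (convex_Ici 1) (fun y hy => ?_) (fun y hy => ?_)
    · have hy0 : 0 < y := zero_lt_one.trans_le hy
      exact (((hasDerivAt_logGammaApprox n hy0).sub ((hasDerivAt_log hy0.ne').const_mul b)).sub
        ((hasDerivAt_id y).const_mul m))
    · rw [interior_Ici] at hy
      have := h y (le_of_lt hy)
      simp only [mul_one]
      linarith
  have := hmono self_mem_Ici hx hx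
  simp only [log_one, mul_zero, sub_zero, mul_one] at this
  linarith

theorem logGamma_lower_bound (x : ℝ) (hx : 1 ≤ x) :
    (x - Real.eulerMascheroniConstant) * Real.log x - x + 1 ≤ Real.log (Real.Gamma x) := by
  obtain ⟨hγ₁, hγ₂⟩ := eulerMascheroniConstant_mem_Ioo
  set b := 1 - eulerMascheroniConstant
  have hb : b ∈ Icc 0.422 0.4232 :=
    ⟨by norm_num at hγ₂ ⊢; linarith, by norm_num at hγ₁ ⊢; linarith⟩
  set m : ℕ → ℝ := fun n => min (digammaApprox n 1 - b) (-(n + 1 : ℝ)⁻¹)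
  have hm : Tendsto m atTop (𝓝 0) := by
    have h₁ : Tendsto (fun n => digammaApprox n 1 - b) atTop (𝓝 0) := by
      rw [← sub_self b]
      exact tendsto_digammaApprox_one.sub_const b
    have h₂ : Tendsto (fun n : ℕ => -(n + 1 : ℝ)⁻¹) atTop (𝓝 0) := by
      simpa using (tendsto_one_div_add_atTop_nhds_zero_nat (𝕜 := ℝ)).neg
    simpa using h₁.min h₂
  have hlim := le_of_tendsto_of_tendsto'
    (by simpa using (hm.mul_const (x - 1)).const_add (b * log x))
    (tendsto_logGammaApprox_sub (by linarith))
    fun n => mul_log_add_le_logGammaApprox_sub n hx fun u hu =>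
      min_le_digammaApprox_sub_mul_inv n hb hu
  linarith
end

section
/- Let K ≥ 2 be an integer and let n_1, ..., n_K be nonnegative integers with N = n_1 + ... + n_K ≥ 1. Then Σ_{k=1}^{K} log Γ(n_k + 1) - log Γ(N + K) ≥ Σ_{k=1}^{K} n_k·log(n_k/N) - (K - 1.5 + γ)·log(N) - K·(K + 1), where γ is the Euler–Mascheroni constant and terms with n_k = 0 contribute 0 to the entropy sum. -/
/-!
Write `N = ∑ nₖ`. Keeping a single term of the multinomial expansion of `N ^ N = (∑ nₖ) ^ N`
gives `N! ∏ nₖ ^ nₖ ≤ N ^ N ∏ nₖ!`, which in logarithms is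
`∑ nₖ log (nₖ / N) ≤ ∑ log nₖ! - log N!`. It remains to compare `Γ(N + K) = (N + K - 1)!` with
`N!`: the `K - 1` extra factors are each at most `N + K - 1 ≤ N e ^ (K - 1)`, so
`log Γ(N + K) ≤ log N! + (K - 1) (log N + K - 1)`, and `γ > 1/2` absorbs the rest.
-/

open Finset
open scoped Nat

namespace Nat

theorem multinomial_mul_prod_pow_le {ι : Type*} [Fintype ι] [DecidableEq ι] (f : ι → ℕ) :
    multinomial univ f * ∏ i, f i ^ f i ≤ (∑ i, f i) ^ ∑ i, f i := by
  rw [sum_pow_eq_sum_piAntidiag]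
  exact single_le_sum (f := fun k ↦ multinomial univ k * ∏ i, f i ^ k i)
    (fun _ _ ↦ Nat.zero_le _) (mem_piAntidiag.2 ⟨rfl, fun i _ ↦ mem_univ i⟩)

theorem factorial_sum_mul_prod_pow_le {ι : Type*} [Fintype ι] (f : ι → ℕ) :
    (∑ i, f i)! * ∏ i, f i ^ f i ≤ (∏ i, (f i)!) * (∑ i, f i) ^ ∑ i, f i := by
  classical
  rw [← multinomial_spec, mul_assoc]
  exact Nat.mul_le_mul_left _ (multinomial_mul_prod_pow_le f)

theorem factorial_add_le_factorial_mul_pow (n m : ℕ) : (n + m)! ≤ n ! * (n + m) ^ m := by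
  rw [← factorial_mul_ascFactorial]
  exact Nat.mul_le_mul_left _ (ascFactorial_le_pow_add n m)

end Nat

namespace Real

theorem sum_mul_log_div_le_sum_log_factorial_sub {ι : Type*} [Fintype ι] (n : ι → ℕ) :
    ∑ i, (n i : ℝ) * log (n i / (∑ j, n j : ℕ))
      ≤ ∑ i, log (n i)! - log (∑ i, n i)! := by
  set N := ∑ i, n i
  have hterm (i : ι) : (n i : ℝ) * log (n i / N) = n i * log (n i) - n i * log N := by
    rcases (n i).eq_zero_or_pos with h | h
    · simp [h]
    have hN : (N : ℝ) ≠ 0 := by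
      exact_mod_cast (h.trans_le (single_le_sum (fun j _ ↦ Nat.zero_le (n j)) (mem_univ i))).ne'
    rw [log_div (by exact_mod_cast h.ne') hN, mul_sub]
  have hlog : log N ! + ∑ i, (n i : ℝ) * log (n i) ≤ ∑ i, log (n i)! + N * log N := by
    have hpos (m : ℕ) : (0 : ℝ) < m ^ m := mod_cast Nat.pow_self_pos
    have hprod : (0 : ℝ) < ∏ i, (n i : ℝ) ^ n i := prod_pos fun i _ ↦ hpos _
    have h : (N ! : ℝ) * ∏ i, (n i : ℝ) ^ n i ≤ (∏ i, ((n i)! : ℝ)) * (N : ℝ) ^ N :=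
      mod_cast Nat.factorial_sum_mul_prod_pow_le n
    have := log_le_log (by positivity) h
    rw [log_mul (by positivity) hprod.ne', log_mul (by positivity) (hpos _).ne',
      log_prod fun i _ ↦ (hpos _).ne', log_prod fun i _ ↦ by positivity] at this
    simpa only [log_pow] using this
  have hsum : ∑ i, (n i : ℝ) * log N = N * log N := by
    rw [← sum_mul]; push_cast [N]; rfl
  simp only [hterm, sum_sub_distrib, hsum]
  linarith

theorem log_factorial_add_le (n m : ℕ) :
    log (n + m)! ≤ log n ! + m * log (n + m : ℕ) := by
  have hpow : (((n + m) ^ m : ℕ) : ℝ) ≠ 0 := by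
    rcases m with _ | m
    · simp
    · exact_mod_cast (pow_pos (by omega : 0 < n + (m + 1)) _).ne'
  have h : ((n + m)! : ℝ) ≤ (n ! * (n + m) ^ m : ℕ) :=
    mod_cast Nat.factorial_add_le_factorial_mul_pow n m
  replace h := log_le_log (by positivity) h
  rw [Nat.cast_mul, log_mul (by positivity) hpow, Nat.cast_pow, log_pow] at h
  exact_mod_cast h

theorem log_add_le_log_add {x y : ℝ} (hx : 1 ≤ x) (hy : 0 ≤ y) :
    log (x + y) ≤ log x + y := by
  calc log (x + y) ≤ log (x * exp y) := by
        refine log_le_log (by positivity) ?_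
        nlinarith [add_one_le_exp y]
    _ = log x + y := by rw [log_mul (by positivity) (exp_pos y).ne', log_exp]

end Real

theorem logGamma_multinomial_entropy_bound_general (K : ℕ) (n : Fin K → ℕ)
    (N : ℕ) (hN : N = ∑ k, n k) (hN1 : 1 ≤ N) :
    (∑ k, (n k : ℝ) * Real.log ((n k : ℝ) / N))
      - ((K : ℝ) - 1.5 + Real.eulerMascheroniConstant) * Real.log N - K * (K + 1)
    ≤ (∑ k, Real.log (Real.Gamma ((n k : ℝ) + 1))) - Real.log (Real.Gamma ((N : ℝ) + K)) := by
  have hK : 1 ≤ K := Nat.pos_of_ne_zero (by rintro rfl; simp at hN; omega)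
  have hN1' : (1 : ℝ) ≤ N := mod_cast hN1
  have hK1 : ((K - 1 : ℕ) : ℝ) = K - 1 := by push_cast [hK]; ring
  have hGamma : Real.Gamma (N + K) = (N + (K - 1))! := by
    rw [← Real.Gamma_nat_eq_factorial, Nat.cast_add, hK1]; ring_nf
  have hentropy := Real.sum_mul_log_div_le_sum_log_factorial_sub n
  rw [← hN] at hentropy
  have hfactorial :
      Real.log (N + (K - 1))! ≤ Real.log N ! + (K - 1) * (Real.log N + (K - 1)) := by
    calc Real.log (N + (K - 1))! ≤ Real.log N ! + (K - 1) * Real.log (N + (K - 1) : ℕ) := by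
          simpa only [hK1] using Real.log_factorial_add_le N (K - 1)
      _ ≤ Real.log N ! + (K - 1) * (Real.log N + (K - 1)) := by
          gcongr
          · exact sub_nonneg.2 (mod_cast hK)
          · rw [Nat.cast_add, hK1]
            exact Real.log_add_le_log_add hN1' (sub_nonneg.2 (mod_cast hK))
  have hconst : ((K : ℝ) - 1) * (Real.log N + (K - 1))
      ≤ ((K : ℝ) - 1.5 + Real.eulerMascheroniConstant) * Real.log N + K * (K + 1) := by
    nlinarith [Real.one_half_lt_eulerMascheroniConstant, Real.log_nonneg hN1']
  simp only [Real.Gamma_nat_eq_factorial, hGamma]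
  linarith

theorem logGamma_multinomial_entropy_bound (K : ℕ) (hK : 2 ≤ K) (n : Fin K → ℕ)
    (N : ℕ) (hN : N = ∑ k, n k) (hN1 : 1 ≤ N) :
    (∑ k, (n k : ℝ) * Real.log ((n k : ℝ) / N))
      - ((K : ℝ) - 1.5 + Real.eulerMascheroniConstant) * Real.log N - K * (K + 1)
    ≤ (∑ k, Real.log (Real.Gamma ((n k : ℝ) + 1))) - Real.log (Real.Gamma ((N : ℝ) + K)) :=
  logGamma_multinomial_entropy_bound_general K n N hN hN1
end
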